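/- arXiv:2502.07279 — 3 statements merged into one kernel-verified Lean document; each statement's English description precedes it below -/
import Mathlib

section
/- Donsker–Varadhan variational formula: for a probability measure μ and bounded measurable Q, log ∫ exp(Q) dμ = sup over probability measures π ≪ μ of (∫ Q dπ − KL(π ‖ μ)). -/
/-! With `Z = ∫ exp Q dμ` and the Gibbs measure `μ^Q = μ.tilted Q` of density `exp Q / Z`,
the chain rule for log-likelihood ratios gives, for every probability measure `π ≪ μ`,
`∫ Q dπ - KL(π ‖ μ) = log Z - KL(π ‖ μ^Q)`.
Gibbs' inequality `KL(π ‖ μ^Q) ≥ 0` makes `log Z` an upper bound, and `π = μ^Q` attains it. -/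

open MeasureTheory InformationTheory

/-- Kullback–Leibler divergence `∫ log(dπ/dμ) dπ` (as a real integral, for `π ≪ μ`
with finite divergence). -/
noncomputable def klReal {α : Type*} [MeasurableSpace α] (π μ : Measure α) : ℝ :=
  ∫ a, Real.log ((π.rnDeriv μ) a).toReal ∂π

section Gibbs

variable {α : Type*} [MeasurableSpace α] {μ ν : Measure α} {f : α → ℝ}

lemma integral_llr_nonneg_of_isProbabilityMeasure
    [IsProbabilityMeasure ν] [IsProbabilityMeasure μ] (hνμ : ν ≪ μ) :
    0 ≤ ∫ a, llr ν μ a ∂ν := by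
  rw [← toReal_klDiv_of_measure_eq hνμ (by simp)]
  exact ENNReal.toReal_nonneg

lemma integral_sub_integral_llr_eq [IsProbabilityMeasure ν] [SigmaFinite μ] (hνμ : ν ≪ μ)
    (hfν : Integrable f ν) (hfμ : Integrable (fun a ↦ Real.exp (f a)) μ)
    (h_int : Integrable (llr ν μ) ν) :
    ∫ a, f a ∂ν - ∫ a, llr ν μ a ∂ν
      = Real.log (∫ a, Real.exp (f a) ∂μ) - ∫ a, llr ν (μ.tilted f) a ∂ν := by
  rw [integral_llr_tilted_right hνμ hfν hfμ h_int]
  ring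

lemma integral_sub_integral_llr_le_log_integral_exp [IsProbabilityMeasure ν] [SigmaFinite μ]
    [NeZero μ] (hνμ : ν ≪ μ) (hfν : Integrable f ν) (hfμ : Integrable (fun a ↦ Real.exp (f a)) μ)
    (h_int : Integrable (llr ν μ) ν) :
    ∫ a, f a ∂ν - ∫ a, llr ν μ a ∂ν ≤ Real.log (∫ a, Real.exp (f a) ∂μ) := by
  have := isProbabilityMeasure_tilted hfμ
  have hgibbs : 0 ≤ ∫ a, llr ν (μ.tilted f) a ∂ν :=
    integral_llr_nonneg_of_isProbabilityMeasure (hνμ.trans (absolutelyContinuous_tilted hfμ))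
  linarith [integral_sub_integral_llr_eq hνμ hfν hfμ h_int]

lemma llr_tilted_self_ae_eq [SigmaFinite μ] (hfμ : Integrable (fun a ↦ Real.exp (f a)) μ) :
    llr (μ.tilted f) μ =ᵐ[μ.tilted f] fun a ↦ f a - Real.log (∫ a, Real.exp (f a) ∂μ) :=
  (tilted_absolutelyContinuous μ f).ae_le (log_rnDeriv_tilted_left_self hfμ)

lemma integrable_llr_tilted_self [SigmaFinite μ] [NeZero μ]
    (hfμ : Integrable (fun a ↦ Real.exp (f a)) μ) (hf : Integrable f (μ.tilted f)) :
    Integrable (llr (μ.tilted f) μ) (μ.tilted f) :=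
  have := isProbabilityMeasure_tilted hfμ
  (hf.sub (integrable_const _)).congr (llr_tilted_self_ae_eq hfμ).symm

lemma integral_sub_integral_llr_tilted_self [SigmaFinite μ] [NeZero μ]
    (hfμ : Integrable (fun a ↦ Real.exp (f a)) μ) (hf : Integrable f (μ.tilted f)) :
    ∫ a, f a ∂μ.tilted f - ∫ a, llr (μ.tilted f) μ a ∂μ.tilted f
      = Real.log (∫ a, Real.exp (f a) ∂μ) := by
  have := isProbabilityMeasure_tilted hfμ
  rw [integral_congr_ae (llr_tilted_self_ae_eq hfμ), integral_sub hf (integrable_const _)]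
  simp

end Gibbs

/-- Donsker–Varadhan variational formula: for a probability measure `μ` and bounded
measurable `Q`, `log ∫ exp(Q) dμ` is the supremum over probability measures `π ≪ μ`
(with finite KL divergence) of `∫ Q dπ − KL(π‖μ)`. -/
theorem donsker_varadhan {α : Type*} [MeasurableSpace α]
    (μ : Measure α) [IsProbabilityMeasure μ]
    (Q : α → ℝ) (hQm : Measurable Q) (C : ℝ) (hQb : ∀ a, |Q a| ≤ C) :
    IsLUB {x : ℝ | ∃ π : Measure α, IsProbabilityMeasure π ∧ π ≪ μ ∧
        Integrable (fun a => Real.log ((π.rnDeriv μ) a).toReal) π ∧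
        x = (∫ a, Q a ∂π) - klReal π μ}
      (Real.log (∫ a, Real.exp (Q a) ∂μ)) := by
  have hQ : ∀ (π : Measure α) [IsProbabilityMeasure π], Integrable Q π := fun π _ ↦
    .of_bound hQm.aestronglyMeasurable C (ae_of_all _ hQb)
  have hexpQ : Integrable (fun a ↦ Real.exp (Q a)) μ :=
    .of_bound hQm.exp.aestronglyMeasurable (Real.exp C) (ae_of_all _ fun a ↦ by
      rw [Real.norm_of_nonneg (Real.exp_pos _).le]
      exact Real.exp_le_exp.mpr (le_of_abs_le (hQb a)))
  have := isProbabilityMeasure_tilted hexpQ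
  refine ⟨?_, fun y hy ↦ hy ⟨μ.tilted Q, this, tilted_absolutelyContinuous μ Q,
    integrable_llr_tilted_self hexpQ (hQ _),
    (integral_sub_integral_llr_tilted_self hexpQ (hQ _)).symm⟩⟩
  rintro _ ⟨π, hπ, hπμ, h_int, rfl⟩
  exact integral_sub_integral_llr_le_log_integral_exp hπμ (hQ π) hexpQ h_int
end

section
/- KL-regularized soft policy improvement: In a finite discounted MDP with reward R, reference policy π_d (with full support), and β > 0, define for a policy π the KL-regularized Q-function Q_π(s,a) = E[R(s₀,a₀) + Σ_{i≥1} γ^i (R(s_i,a_i) − β·KL(π(·|s_i) ‖ π_d(·|s_i)))] with (s₀,a₀)=(s,a). Let π_new(·|s) ∝ π_d(·|s)·exp(Q_π(s,a)/β). Then Q_{π_new}(s,a) ≥ Q_π(s,a) for all (s,a). -/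
/-! The soft Q-function satisfies the Bellman equation `Q_π = R + γ P V_π`, where
`V_π(s) = E_{π(·|s)} Q_π(s,·) - β KL(π(·|s) ‖ π_d(·|s))`. By the Gibbs variational principle
`π_new(·|s)` maximises `p ↦ E_p Q_π(s,·) - β KL(p ‖ π_d(·|s))`, so `Δ = Q_{π_new} - Q_π` satisfies
`Δ ≥ γ P π_new Δ`. At a minimum point of `Δ` this gives `min Δ ≥ γ min Δ`, hence `Δ ≥ 0` as `γ < 1`. -/

/-- Discrete KL divergence `∑_a p(a)·log(p(a)/q(a))`. -/
noncomputable def klDisc {A : Type*} [Fintype A] (p q : A → ℝ) : ℝ :=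
  ∑ a, p a * Real.log (p a / q a)

/-- Distribution of the state at time `i+1`, starting from state `s` and action `a`
and afterwards following policy `pol` in the MDP with transition kernel `P`. -/
def sdistFrom {S A : Type*} [Fintype S] [Fintype A]
    (P : S → A → S → ℝ) (pol : S → A → ℝ) (s : S) (a : A) : ℕ → S → ℝ
  | 0 => P s a
  | i + 1 => fun s'' => ∑ s', ∑ a', sdistFrom P pol s a i s' * pol s' a' * P s' a' s''

/-- KL-regularized (soft) Q-function:
`Q_π(s,a) = E[R(s₀,a₀) + ∑_{i≥1} γ^i (R(s_i,a_i) − β·KL(π(·|s_i)‖π_d(·|s_i)))]`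
with `(s₀,a₀) = (s,a)` and the trajectory generated by `P` and `π`. -/
noncomputable def softQ {S A : Type*} [Fintype S] [Fintype A]
    (γ β : ℝ) (R : S → A → ℝ) (P : S → A → S → ℝ) (πd pol : S → A → ℝ)
    (s : S) (a : A) : ℝ :=
  R s a + ∑' i : ℕ, γ ^ (i + 1) *
    ∑ s', sdistFrom P pol s a i s' *
      ((∑ a', pol s' a' * R s' a') - β * klDisc (pol s') (πd s'))

open Finset Real

section KL
variable {A : Type*} [Fintype A]

theorem klDisc_self (p : A → ℝ) : klDisc p p = 0 :=
  sum_eq_zero fun a _ => by rcases eq_or_ne (p a) 0 with h | h <;> simp [h]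

theorem sub_le_mul_log_div {p q : ℝ} (hp : 0 ≤ p) (hq : 0 < q) : p - q ≤ p * log (p / q) :=
  calc p - q = q * (p / q - 1) := by field_simp
    _ ≤ q * (p / q * log (p / q)) :=
      mul_le_mul_of_nonneg_left (self_sub_one_le_mul_log (div_nonneg hp hq.le)) hq.le
    _ = p * log (p / q) := by field_simp

theorem klDisc_nonneg {p q : A → ℝ} (hp : ∀ a, 0 ≤ p a) (hq : ∀ a, 0 < q a)
    (hpq : ∑ a, q a ≤ ∑ a, p a) : 0 ≤ klDisc p q :=
  calc 0 ≤ ∑ a, (p a - q a) := by rw [sum_sub_distrib]; linarith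
    _ ≤ klDisc p q := sum_le_sum fun a _ => sub_le_mul_log_div (hp a) (hq a)

end KL

section Gibbs
variable {A : Type*} [Fintype A]

noncomputable def gibbs (β : ℝ) (μ q : A → ℝ) (a : A) : ℝ :=
  μ a * exp (q a / β) / ∑ a', μ a' * exp (q a' / β)

noncomputable def softValue (β : ℝ) (μ p q : A → ℝ) : ℝ :=
  ∑ a, p a * q a - β * klDisc p μ

variable [Nonempty A] {β : ℝ} {μ : A → ℝ} (q : A → ℝ)

theorem sum_mul_exp_pos (hμ : ∀ a, 0 < μ a) : 0 < ∑ a, μ a * exp (q a / β) :=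
  sum_pos (fun a _ => mul_pos (hμ a) (exp_pos _)) univ_nonempty

theorem gibbs_pos (hμ : ∀ a, 0 < μ a) (a : A) : 0 < gibbs β μ q a :=
  div_pos (mul_pos (hμ a) (exp_pos _)) (sum_mul_exp_pos q hμ)

theorem sum_gibbs (hμ : ∀ a, 0 < μ a) : ∑ a, gibbs β μ q a = 1 := by
  simp_rw [gibbs]
  rw [← sum_div, div_self (sum_mul_exp_pos q hμ).ne']

theorem softValue_eq_log_sub_klDisc_gibbs (hβ : β ≠ 0) (hμ : ∀ a, 0 < μ a) {p : A → ℝ}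
    (hp : ∑ a, p a = 1) :
    softValue β μ p q = β * log (∑ a, μ a * exp (q a / β)) - β * klDisc p (gibbs β μ q) := by
  set Z := ∑ a, μ a * exp (q a / β)
  have hZ : 0 < Z := sum_mul_exp_pos q hμ
  have hterm : ∀ a, p a * log (p a / gibbs β μ q a)
      = p a * log (p a / μ a) - p a * q a / β + p a * log Z := by
    intro a
    rcases eq_or_ne (p a) 0 with h | h
    · simp [h]
    · rw [log_div h (gibbs_pos q hμ a).ne', gibbs, log_div (mul_pos (hμ a) (exp_pos _)).ne' hZ.ne',
        log_mul (hμ a).ne' (exp_pos _).ne', log_exp, log_div h (hμ a).ne']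
      ring
  have hkl : klDisc p (gibbs β μ q) = klDisc p μ - (∑ a, p a * q a) / β + log Z := by
    simp only [klDisc, hterm, sum_add_distrib, sum_sub_distrib, ← sum_div, ← sum_mul, hp, one_mul]
  rw [softValue, hkl]
  field_simp
  ring

theorem softValue_le_softValue_gibbs (hβ : 0 < β) (hμ : ∀ a, 0 < μ a) {p : A → ℝ}
    (hp : ∀ a, 0 ≤ p a) (hp1 : ∑ a, p a = 1) :
    softValue β μ p q ≤ softValue β μ (gibbs β μ q) q := by
  rw [softValue_eq_log_sub_klDisc_gibbs q hβ.ne' hμ hp1,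
    softValue_eq_log_sub_klDisc_gibbs q hβ.ne' hμ (sum_gibbs q hμ), klDisc_self]
  have := klDisc_nonneg hp (gibbs_pos (β := β) q hμ) (by rw [hp1, sum_gibbs q hμ])
  nlinarith

end Gibbs

section StateDistribution
variable {S A : Type*} [Fintype S] [Fintype A] (P : S → A → S → ℝ) (pol : S → A → ℝ)

theorem sum_sdistFrom_succ_mul (s : S) (a : A) (i : ℕ) (f : S → ℝ) :
    ∑ s'', sdistFrom P pol s a (i + 1) s'' * f s''
      = ∑ s', sdistFrom P pol s a i s' * ∑ a', pol s' a' * ∑ s'', P s' a' s'' * f s'' := by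
  simp only [sdistFrom, sum_mul, mul_sum]
  rw [sum_comm]
  refine sum_congr rfl fun s' _ => ?_
  rw [sum_comm]
  exact sum_congr rfl fun a' _ => sum_congr rfl fun s'' _ => by ring

theorem sum_sdistFrom_succ_mul_eq_sum_first_step (s : S) (a : A) (i : ℕ) (f : S → ℝ) :
    ∑ s'', sdistFrom P pol s a (i + 1) s'' * f s''
      = ∑ s₁, P s a s₁ * ∑ a₁, pol s₁ a₁ * ∑ s'', sdistFrom P pol s₁ a₁ i s'' * f s'' := by
  induction i generalizing f with
  | zero => exact sum_sdistFrom_succ_mul P pol s a 0 f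
  | succ i ih =>
    rw [sum_sdistFrom_succ_mul P pol s a (i + 1), ih]
    simp only [sum_sdistFrom_succ_mul P pol _ _ i]

variable {P pol}

theorem sdistFrom_nonneg (hP : ∀ s a s', 0 ≤ P s a s') (hpol : ∀ s a, 0 ≤ pol s a)
    (s : S) (a : A) (i : ℕ) (s' : S) : 0 ≤ sdistFrom P pol s a i s' := by
  induction i generalizing s' with
  | zero => exact hP s a s'
  | succ i ih =>
    exact sum_nonneg fun _ _ => sum_nonneg fun _ _ =>
      mul_nonneg (mul_nonneg (ih _) (hpol _ _)) (hP _ _ _)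

theorem sum_sdistFrom (hPsum : ∀ s a, ∑ s', P s a s' = 1) (hpolsum : ∀ s, ∑ a, pol s a = 1)
    (s : S) (a : A) (i : ℕ) : ∑ s', sdistFrom P pol s a i s' = 1 := by
  induction i with
  | zero => exact hPsum s a
  | succ i ih =>
    simpa only [mul_one, hPsum, hpolsum, ih] using sum_sdistFrom_succ_mul P pol s a i fun _ => 1

theorem abs_sum_sdistFrom_mul_le (hP : ∀ s a s', 0 ≤ P s a s') (hPsum : ∀ s a, ∑ s', P s a s' = 1)
    (hpol : ∀ s a, 0 ≤ pol s a) (hpolsum : ∀ s, ∑ a, pol s a = 1) {f : S → ℝ} {C : ℝ}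
    (hf : ∀ s', |f s'| ≤ C) (s : S) (a : A) (i : ℕ) :
    |∑ s', sdistFrom P pol s a i s' * f s'| ≤ C :=
  calc |∑ s', sdistFrom P pol s a i s' * f s'|
      ≤ ∑ s', sdistFrom P pol s a i s' * C := by
        refine (abs_sum_le_sum_abs _ _).trans (sum_le_sum fun s' _ => ?_)
        rw [abs_mul, abs_of_nonneg (sdistFrom_nonneg hP hpol s a i s')]
        exact mul_le_mul_of_nonneg_left (hf s') (sdistFrom_nonneg hP hpol s a i s')
    _ = C := by rw [← sum_mul, sum_sdistFrom hPsum hpolsum, one_mul]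

theorem summable_discounted_sum_sdistFrom_mul {γ : ℝ} (hγ : |γ| < 1)
    (hP : ∀ s a s', 0 ≤ P s a s') (hPsum : ∀ s a, ∑ s', P s a s' = 1)
    (hpol : ∀ s a, 0 ≤ pol s a) (hpolsum : ∀ s, ∑ a, pol s a = 1) (f : S → ℝ) (s : S) (a : A) :
    Summable fun i : ℕ => γ ^ (i + 1) * ∑ s', sdistFrom P pol s a i s' * f s' := by
  obtain ⟨C, hC⟩ := (Set.finite_range fun s' => |f s'|).bddAbove
  refine Summable.of_norm_bounded (g := fun i => |γ| ^ (i + 1) * C)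
    (((summable_geometric_of_lt_one (abs_nonneg γ) hγ).mul_left (|γ| * C)).congr fun i => ?_)
    fun i => ?_
  · ring
  · rw [norm_mul, norm_pow, Real.norm_eq_abs, Real.norm_eq_abs]
    exact mul_le_mul_of_nonneg_left
      (abs_sum_sdistFrom_mul_le hP hPsum hpol hpolsum (fun s' => hC ⟨s', rfl⟩) s a i)
      (pow_nonneg (abs_nonneg γ) _)

end StateDistribution

section Bellman
variable {S A : Type*} [Fintype S] [Fintype A] {γ β : ℝ} {R : S → A → ℝ}
  {P : S → A → S → ℝ} {πd pol : S → A → ℝ}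

theorem softQ_eq_bellman (hγ : |γ| < 1) (hP : ∀ s a s', 0 ≤ P s a s')
    (hPsum : ∀ s a, ∑ s', P s a s' = 1) (hpol : ∀ s a, 0 ≤ pol s a)
    (hpolsum : ∀ s, ∑ a, pol s a = 1) (s : S) (a : A) :
    softQ γ β R P πd pol s a
      = R s a + γ * ∑ s', P s a s' * softValue β (πd s') (pol s') (softQ γ β R P πd pol s') := by
  set f : S → ℝ := fun s' => ∑ a', pol s' a' * R s' a' - β * klDisc (pol s') (πd s')
  set u : S → A → ℕ → ℝ := fun s a i => γ ^ (i + 1) * ∑ s', sdistFrom P pol s a i s' * f s'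
  have hQ : ∀ s a, softQ γ β R P πd pol s a = R s a + ∑' i, u s a i := fun _ _ => rfl
  have hu : ∀ s a, Summable (u s a) :=
    summable_discounted_sum_sdistFrom_mul hγ hP hPsum hpol hpolsum f
  have hu_succ : ∀ j, u s a (j + 1) = γ * ∑ s₁, P s a s₁ * ∑ a₁, pol s₁ a₁ * u s₁ a₁ j := by
    intro j
    simp only [u]
    rw [sum_sdistFrom_succ_mul_eq_sum_first_step]
    simp only [mul_sum]
    exact sum_congr rfl fun _ _ => sum_congr rfl fun _ _ => sum_congr rfl fun _ _ => by ring
  have htail : HasSum (fun j => u s a (j + 1))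
      (γ * ∑ s₁, P s a s₁ * ∑ a₁, pol s₁ a₁ * ∑' j, u s₁ a₁ j) := by
    simp only [hu_succ]
    exact (hasSum_sum fun s₁ _ => (hasSum_sum fun a₁ _ =>
      (hu s₁ a₁).hasSum.mul_left _).mul_left _).mul_left γ
  have hQ_sub : ∀ s a, ∑' i, u s a i = softQ γ β R P πd pol s a - R s a := fun s a => by
    rw [hQ]; ring
  have hu_zero : u s a 0 = γ * ∑ s', P s a s' * f s' := by simp only [u, zero_add, pow_one]; rfl
  rw [hQ s a, (hu s a).tsum_eq_zero_add, htail.tsum_eq, hu_zero, ← mul_add, ← sum_add_distrib]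
  congr 2
  refine sum_congr rfl fun s' _ => ?_
  simp only [f, softValue, hQ_sub, mul_sub, sum_sub_distrib]
  ring

end Bellman

theorem nonneg_of_discount_mul_kernel_mean_le {X : Type*} [Fintype X] {γ : ℝ} (hγ0 : 0 ≤ γ)
    (hγ1 : γ < 1) {K : X → X → ℝ} (hK : ∀ x y, 0 ≤ K x y) (hKsum : ∀ x, ∑ y, K x y = 1)
    {Δ : X → ℝ} (hΔ : ∀ x, γ * ∑ y, K x y * Δ y ≤ Δ x) (x : X) : 0 ≤ Δ x := by
  have : Nonempty X := ⟨x⟩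
  obtain ⟨x₀, hx₀⟩ := Finite.exists_min Δ
  have hmean : Δ x₀ ≤ ∑ y, K x₀ y * Δ y :=
    calc Δ x₀ = ∑ y, K x₀ y * Δ x₀ := by rw [← sum_mul, hKsum, one_mul]
      _ ≤ ∑ y, K x₀ y * Δ y := sum_le_sum fun y _ => mul_le_mul_of_nonneg_left (hx₀ y) (hK x₀ y)
  have : γ * Δ x₀ ≤ Δ x₀ := (mul_le_mul_of_nonneg_left hmean hγ0).trans (hΔ x₀)
  nlinarith [hx₀ x]

section Improvement
variable {S A : Type*} [Fintype S] [Fintype A] {γ β : ℝ} {R : S → A → ℝ}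
  {P : S → A → S → ℝ} {πd pol pol' : S → A → ℝ}

theorem discount_mul_mean_sub_softQ_le (hγ : γ ∈ Set.Ioo (0 : ℝ) 1)
    (hP : ∀ s a s', 0 ≤ P s a s') (hPsum : ∀ s a, ∑ s', P s a s' = 1)
    (hpol : ∀ s a, 0 ≤ pol s a) (hpolsum : ∀ s, ∑ a, pol s a = 1)
    (hpol' : ∀ s a, 0 ≤ pol' s a) (hpol'sum : ∀ s, ∑ a, pol' s a = 1)
    (himprove : ∀ s, softValue β (πd s) (pol s) (softQ γ β R P πd pol s)
      ≤ softValue β (πd s) (pol' s) (softQ γ β R P πd pol s)) (s : S) (a : A) :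
    γ * ∑ s', P s a s' * ∑ a', pol' s' a' *
        (softQ γ β R P πd pol' s' a' - softQ γ β R P πd pol s' a')
      ≤ softQ γ β R P πd pol' s a - softQ γ β R P πd pol s a := by
  have hγ' : |γ| < 1 := abs_lt.mpr ⟨by linarith [hγ.1], hγ.2⟩
  rw [softQ_eq_bellman hγ' hP hPsum hpol' hpol'sum, softQ_eq_bellman hγ' hP hPsum hpol hpolsum,
    add_sub_add_left_eq_sub, ← mul_sub, ← sum_sub_distrib]
  gcongr with s'
  · exact hγ.1.le
  · rw [← mul_sub]
    refine mul_le_mul_of_nonneg_left ?_ (hP s a s')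
    have := himprove s'
    simp only [softValue, mul_sub, sum_sub_distrib] at this ⊢
    linarith

theorem softQ_le_softQ_of_softValue_le (hγ : γ ∈ Set.Ioo (0 : ℝ) 1)
    (hP : ∀ s a s', 0 ≤ P s a s') (hPsum : ∀ s a, ∑ s', P s a s' = 1)
    (hpol : ∀ s a, 0 ≤ pol s a) (hpolsum : ∀ s, ∑ a, pol s a = 1)
    (hpol' : ∀ s a, 0 ≤ pol' s a) (hpol'sum : ∀ s, ∑ a, pol' s a = 1)
    (himprove : ∀ s, softValue β (πd s) (pol s) (softQ γ β R P πd pol s)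
      ≤ softValue β (πd s) (pol' s) (softQ γ β R P πd pol s)) (s : S) (a : A) :
    softQ γ β R P πd pol s a ≤ softQ γ β R P πd pol' s a :=
  sub_nonneg.mp <| nonneg_of_discount_mul_kernel_mean_le hγ.1.le hγ.2
    (K := fun x y : S × A => P x.1 x.2 y.1 * pol' y.1 y.2)
    (Δ := fun x => softQ γ β R P πd pol' x.1 x.2 - softQ γ β R P πd pol x.1 x.2)
    (fun x y => mul_nonneg (hP _ _ _) (hpol' _ _))
    (fun x => by simp only [Fintype.sum_prod_type, ← mul_sum, hpol'sum, mul_one, hPsum])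
    (fun x => by
      simpa only [Fintype.sum_prod_type, mul_sum, mul_assoc] using
        discount_mul_mean_sub_softQ_le hγ hP hPsum hpol hpolsum hpol' hpol'sum himprove x.1 x.2)
    (s, a)

end Improvement

theorem soft_policy_improvement_general {S A : Type*} [Fintype S] [Fintype A]
    (γ : ℝ) (hγ : γ ∈ Set.Ioo (0 : ℝ) 1) (β : ℝ) (hβ : 0 < β)
    (R : S → A → ℝ)
    (P : S → A → S → ℝ) (hP : ∀ s a s', 0 ≤ P s a s') (hPsum : ∀ s a, ∑ s', P s a s' = 1)
    (πd : S → A → ℝ) (hπd : ∀ s a, 0 < πd s a)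
    (pol : S → A → ℝ) (hpol : ∀ s a, 0 ≤ pol s a) (hpolsum : ∀ s, ∑ a, pol s a = 1)
    (πnew : S → A → ℝ)
    (hπnew : ∀ s a, πnew s a =
      πd s a * Real.exp (softQ γ β R P πd pol s a / β) /
        ∑ a', πd s a' * Real.exp (softQ γ β R P πd pol s a' / β)) :
    ∀ s a, softQ γ β R P πd pol s a ≤ softQ γ β R P πd πnew s a := by
  intro s a
  have : Nonempty A := ⟨a⟩
  have hgibbs : ∀ s, πnew s = gibbs β (πd s) (softQ γ β R P πd pol s) :=
    fun s => funext (hπnew s)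
  refine softQ_le_softQ_of_softValue_le hγ hP hPsum hpol hpolsum
    (fun s a => by rw [hgibbs]; exact (gibbs_pos _ (hπd s) a).le)
    (fun s => by rw [hgibbs]; exact sum_gibbs _ (hπd s))
    (fun s => ?_) s a
  rw [hgibbs]
  exact softValue_le_softValue_gibbs _ hβ (hπd s) (hpol s) (hpolsum s)

/-- KL-regularized soft policy improvement: if
`π_new(·|s) ∝ π_d(·|s)·exp(Q_π(s,·)/β)`, then `Q_{π_new}(s,a) ≥ Q_π(s,a)` for all `(s,a)`. -/
theorem soft_policy_improvement {S A : Type*} [Fintype S] [Fintype A]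
    (γ : ℝ) (hγ : γ ∈ Set.Ioo (0 : ℝ) 1) (β : ℝ) (hβ : 0 < β)
    (R : S → A → ℝ)
    (P : S → A → S → ℝ) (hP : ∀ s a s', 0 ≤ P s a s') (hPsum : ∀ s a, ∑ s', P s a s' = 1)
    (πd : S → A → ℝ) (hπd : ∀ s a, 0 < πd s a) (hπdsum : ∀ s, ∑ a, πd s a = 1)
    (pol : S → A → ℝ) (hpol : ∀ s a, 0 ≤ pol s a) (hpolsum : ∀ s, ∑ a, pol s a = 1)
    (πnew : S → A → ℝ)
    (hπnew : ∀ s a, πnew s a =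
      πd s a * Real.exp (softQ γ β R P πd pol s a / β) /
        ∑ a', πd s a' * Real.exp (softQ γ β R P πd pol s a' / β)) :
    ∀ s a, softQ γ β R P πd pol s a ≤ softQ γ β R P πd πnew s a :=
  soft_policy_improvement_general γ hγ β hβ R P hP hPsum πd hπd pol hpol hpolsum πnew hπnew
end

section
/- For the simplex H = conv{e₁,…,e_S} ⊂ ℝ^S with barycenter O = (1/S,…,1/S), the central symmetrization ratio u(O) = vol((2O−H) ∩ H)/vol(H) satisfies u(O) ≥ 1/(S−1)^{S−1}. -/
/-!
The homothety with centre `O` and ratio `-1/(S-1)` maps `H` into `(2O - H) ∩ H`: it sends the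
vertex `eₖ` to the barycentre of the opposite facet, and reflecting through `O` turns it into the
homothety of ratio `1/(S-1)`, which maps `H` into itself. Hence the intersection has at least
`(S-1)^{-(S-1)}` times the `(S-1)`-dimensional measure of `H`. That measure is positive and finite
since `H` is an injective affine image of a body of positive finite volume in `ℝ^{S-1}`.
-/

open MeasureTheory
open scoped ENNReal NNReal

theorem hausdorffMeasure_affineMap_image_ne_zero {ι V P : Type*} [Fintype ι]
    [NormedAddCommGroup V] [NormedSpace ℝ V] [MetricSpace P] [NormedAddTorsor V P]
    [MeasurableSpace P] [BorelSpace P] {f : (ι → ℝ) →ᵃ[ℝ] P} (hf : Function.Injective f)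
    {T : Set (ι → ℝ)} (hT : volume T ≠ 0) : μH[Fintype.card ι] (f '' T) ≠ 0 := by
  obtain ⟨K, hK⟩ := AffineMap.antilipschitzWith_of_finiteDimensional hf
  intro h
  have hle := hK.le_hausdorffMeasure_image (Nat.cast_nonneg (Fintype.card ι)) T
  rw [hausdorffMeasure_pi_real, h, mul_zero] at hle
  exact hT (nonpos_iff_eq_zero.mp hle)

theorem hausdorffMeasure_affineMap_image_ne_top {ι V P : Type*} [Fintype ι]
    [NormedAddCommGroup V] [NormedSpace ℝ V] [MetricSpace P] [NormedAddTorsor V P]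
    [MeasurableSpace P] [BorelSpace P] (f : (ι → ℝ) →ᵃ[ℝ] P) {T : Set (ι → ℝ)}
    (hT : volume T ≠ ∞) : μH[Fintype.card ι] (f '' T) ≠ ∞ := by
  obtain ⟨K, hK⟩ := f.lipschitzWith_of_finiteDimensional
  refine ne_top_of_le_ne_top ?_ (hK.hausdorffMeasure_image_le (Nat.cast_nonneg _) T)
  rw [hausdorffMeasure_pi_real]
  exact ENNReal.mul_ne_top (by simp) hT

theorem volume_setOf_nonneg_sum_le_one_ne_zero (n : ℕ) :
    volume {y : Fin n → ℝ | (∀ i, 0 ≤ y i) ∧ ∑ i, y i ≤ 1} ≠ 0 := by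
  have hbox : Set.univ.pi (fun _ => Set.Ioo 0 (1 / (n + 1 : ℝ))) ⊆
      {y : Fin n → ℝ | (∀ i, 0 ≤ y i) ∧ ∑ i, y i ≤ 1} := by
    intro y hy
    simp only [Set.mem_univ_pi, Set.mem_Ioo] at hy
    refine ⟨fun i => (hy i).1.le, ?_⟩
    calc ∑ i, y i ≤ ∑ _i : Fin n, 1 / (n + 1 : ℝ) := Finset.sum_le_sum fun i _ => (hy i).2.le
      _ ≤ 1 := by
        rw [Finset.sum_const, Finset.card_univ, Fintype.card_fin, nsmul_eq_mul, mul_one_div,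
          div_le_one (by positivity)]
        linarith
  refine (measure_mono hbox).trans_lt' ?_ |>.ne'
  simp only [volume_pi_pi, Real.volume_Ioo, sub_zero, Finset.prod_const, Finset.card_univ,
    Fintype.card_fin]
  exact ENNReal.pow_pos (ENNReal.ofReal_pos.mpr (by positivity)) n

theorem volume_setOf_nonneg_sum_le_one_ne_top (n : ℕ) :
    volume {y : Fin n → ℝ | (∀ i, 0 ≤ y i) ∧ ∑ i, y i ≤ 1} ≠ ∞ := by
  refine ((isCompact_Icc (a := (0 : Fin n → ℝ)) (b := 1)).measure_lt_top (μ := volume)).trans_le'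
    ?_ |>.ne
  exact measure_mono fun y ⟨hy0, hy1⟩ =>
    ⟨hy0, fun i => (Finset.single_le_sum (fun j _ => hy0 j) (Finset.mem_univ i)).trans hy1⟩

theorem convexHull_range_euclideanSingle (ι : Type*) [Fintype ι] [DecidableEq ι] :
    convexHull ℝ (Set.range fun k : ι => EuclideanSpace.single k (1 : ℝ)) =
      WithLp.ofLp ⁻¹' stdSimplex ℝ ι := by
  have h := (WithLp.linearEquiv 2 ℝ (ι → ℝ)).symm.toLinearMap.image_convexHull
    (Set.range fun i j : ι => if i = j then (1 : ℝ) else 0)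
  rw [convexHull_basis_eq_stdSimplex, ← Set.range_comp] at h
  convert h.symm using 3
  · ext k j
    simp [WithLp.linearEquiv, eq_comm]
  · ext x
    simp only [Set.mem_preimage, WithLp.linearEquiv, LinearEquiv.coe_coe, Set.mem_image]
    exact ⟨fun hx => ⟨_, hx, rfl⟩, by rintro ⟨y, hy, rfl⟩; exact hy⟩

def simplexChartLinear (n : ℕ) : (Fin n → ℝ) →ₗ[ℝ] EuclideanSpace ℝ (Fin (n + 1)) where
  toFun y := WithLp.toLp 2 (Fin.cons (-∑ i, y i) y)
  map_add' y z := by ext i; cases i using Fin.cases <;> simp [Finset.sum_add_distrib, add_comm]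
  map_smul' c y := by ext i; cases i using Fin.cases <;> simp [Finset.mul_sum]

def simplexChart (n : ℕ) : (Fin n → ℝ) →ᵃ[ℝ] EuclideanSpace ℝ (Fin (n + 1)) where
  toFun y := WithLp.toLp 2 (Fin.cons (1 - ∑ i, y i) y)
  linear := simplexChartLinear n
  map_vadd' y z := by
    ext i
    cases i using Fin.cases <;>
      simp [simplexChartLinear, Finset.sum_add_distrib, sub_eq_add_neg, add_assoc, add_comm,
        add_left_comm]

theorem simplexChart_injective (n : ℕ) : Function.Injective (simplexChart n) := by
  intro y z h
  funext i
  simpa [simplexChart] using congrArg (fun x : EuclideanSpace ℝ (Fin (n + 1)) => x i.succ) h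

theorem simplexChart_image (n : ℕ) :
    simplexChart n '' {y | (∀ i, 0 ≤ y i) ∧ ∑ i, y i ≤ 1} =
      WithLp.ofLp ⁻¹' stdSimplex ℝ (Fin (n + 1)) := by
  ext x
  constructor
  · rintro ⟨y, ⟨hy0, hy1⟩, rfl⟩
    refine ⟨fun i => ?_, ?_⟩
    · cases i using Fin.cases <;> simp [simplexChart, hy0, hy1]
    · simp [simplexChart, Fin.sum_univ_succ]
  · rintro ⟨hx0, hx1⟩
    rw [Fin.sum_univ_succ] at hx1
    refine ⟨fun i => x i.succ, ⟨fun i => hx0 _, by linarith [hx0 0]⟩, ?_⟩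
    ext i
    cases i using Fin.cases
    · simp only [simplexChart, AffineMap.coe_mk, Fin.cons_zero]
      linarith
    · simp [simplexChart]

theorem homothety_image_stdSimplex_subset_reflection_inter {n : ℕ} (hn : n ≠ 0) :
    let b : EuclideanSpace ℝ (Fin (n + 1)) := WithLp.toLp 2 fun _ => 1 / ((n + 1 : ℕ) : ℝ)
    let Δ : Set (EuclideanSpace ℝ (Fin (n + 1))) := WithLp.ofLp ⁻¹' stdSimplex ℝ (Fin (n + 1))
    AffineMap.homothety b (-(1 / n : ℝ)) '' Δ ⊆ ((fun x => (2 : ℝ) • b - x) '' Δ) ∩ Δ := by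
  intro b Δ
  rintro _ ⟨x, ⟨hx0, hx1⟩, rfl⟩
  have hn' : (1 : ℝ) ≤ n := by exact_mod_cast Nat.one_le_iff_ne_zero.mpr hn
  set y := AffineMap.homothety b (-(1 / n : ℝ)) x
  have hy : ∀ i, y i = (1 - x i) / n := by
    intro i
    simp only [y, b, AffineMap.homothety_apply, vsub_eq_sub, vadd_eq_add, PiLp.add_apply,
      PiLp.smul_apply, PiLp.sub_apply, smul_eq_mul]
    field_simp
    push_cast
    ring
  have hreflect : ∀ i, ((2 : ℝ) • b - y) i = 2 / (n + 1) - (1 - x i) / n := by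
    intro i
    simp [hy, b, div_eq_mul_inv]
  have hxle : ∀ i, x i ≤ 1 := fun i =>
    hx1 ▸ Finset.single_le_sum (fun j _ => hx0 j) (Finset.mem_univ i)
  refine ⟨⟨2 • b - y, ⟨fun i => ?_, ?_⟩, sub_sub_cancel _ _⟩, fun i => ?_, ?_⟩
  · rw [hreflect, sub_nonneg]
    calc (1 - x i) / n ≤ 1 / n := by gcongr; linarith [hx0 i]
      _ ≤ 2 / (n + 1) := by rw [div_le_div_iff₀ (by positivity) (by positivity)]; linarith
  · simp only [hreflect, Finset.sum_sub_distrib, ← Finset.sum_div, hx1, Finset.sum_const,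
      Finset.card_univ, Fintype.card_fin, nsmul_eq_mul, Nat.cast_add, Nat.cast_one]
    field_simp
    ring
  · rw [hy]
    exact div_nonneg (by linarith [hxle i]) (by positivity)
  · simp only [hy, ← Finset.sum_div, Finset.sum_sub_distrib, hx1]
    simp [hn]

theorem ENNReal.coe_le_toReal_div_of_smul_le {a b : ℝ≥0∞} {c : ℝ≥0} (ha : a ≠ ∞) (hb0 : b ≠ 0)
    (hb : b ≠ ∞) (h : c • b ≤ a) : (c : ℝ) ≤ a.toReal / b.toReal := by
  rw [le_div_iff₀ (ENNReal.toReal_pos hb0 hb)]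
  simpa [ENNReal.toReal_smul, NNReal.smul_def] using ENNReal.toReal_mono ha h

/-- For the standard probability simplex `H = conv{e₁,…,e_S} ⊂ ℝ^S` with barycenter
`O = (1/S,…,1/S)`, the central symmetrization ratio
`u(O) = vol((2O−H) ∩ H)/vol(H)` (with `(S-1)`-dimensional Hausdorff volume)
satisfies `u(O) ≥ 1/(S−1)^{S−1}`. -/
theorem simplex_symmetrization_ratio_lower_bound (S : ℕ) (hS : 2 ≤ S)
    (H : Set (EuclideanSpace ℝ (Fin S))) (O : EuclideanSpace ℝ (Fin S))
    (hH : H = convexHull ℝ (Set.range fun k : Fin S => (EuclideanSpace.single k (1 : ℝ))))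
    (hO : O = (WithLp.toLp 2 (fun _ : Fin S => (1 : ℝ) / S) : EuclideanSpace ℝ (Fin S))) :
    (1 : ℝ) / ((S : ℝ) - 1) ^ (S - 1) ≤
      (μH[(S : ℝ) - 1] (((fun x => (2 : ℝ) • O - x) '' H) ∩ H)).toReal /
        (μH[(S : ℝ) - 1] H).toReal := by
  obtain ⟨n, rfl⟩ : ∃ n, S = n + 1 := ⟨S - 1, by omega⟩
  have hn : n ≠ 0 := by omega
  rw [convexHull_range_euclideanSingle] at hH
  subst hH hO
  rw [show ((n + 1 : ℕ) : ℝ) - 1 = n by push_cast; ring, Nat.add_sub_cancel]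
  set Δ : Set (EuclideanSpace ℝ (Fin (n + 1))) := WithLp.ofLp ⁻¹' stdSimplex ℝ (Fin (n + 1))
  have hpos : μH[n] Δ ≠ 0 := by
    simpa [simplexChart_image] using hausdorffMeasure_affineMap_image_ne_zero
      (simplexChart_injective n) (volume_setOf_nonneg_sum_le_one_ne_zero n)
  have htop : μH[n] Δ ≠ ∞ := by
    simpa [simplexChart_image] using hausdorffMeasure_affineMap_image_ne_top (simplexChart n)
      (volume_setOf_nonneg_sum_le_one_ne_top n)
  have hscaled := measure_mono (μ := μH[n]) (homothety_image_stdSimplex_subset_reflection_inter hn)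
  rw [hausdorffMeasure_homothety_image (Nat.cast_nonneg n) _ (by simpa using hn)] at hscaled
  convert ENNReal.coe_le_toReal_div_of_smul_le (ne_top_of_le_ne_top htop
    (measure_mono Set.inter_subset_right)) hpos htop hscaled using 1
  simp
end
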